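/- arXiv:math/9203201 — 2 statements merged into one kernel-verified Lean document; each statement's English description precedes it below -/
import Mathlib

section
/- Let Q = Σ_j q_j ∂/∂z_j be a holomorphic vector field on ℂ^n with Q(0) = 0, let S be a nonconstant complex orbit of Q with 0 ∈ closure(S) and Q ≠ 0 on S, and let f be a holomorphic polynomial with f(0) = 0. If Q^α f = 0 identically on ℂ^n for some α ≥ 1, then f vanishes identically on S. -/
set_option maxHeartbeats 1000000

open Complex

section AuxHartogs
open Metric Set
variable {n : ℕ}
theorem mySlice {h : (Fin n → ℂ) → ℂ} (hh : Differentiable ℂ h) (z v : Fin n → ℂ) (l : ℂ) :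
    HasDerivAt (fun w : ℂ => h (z + w • v)) (fderiv ℂ h (z + l • v) v) l := by
  have h1 : HasDerivAt (fun w : ℂ => z + w • v) v l :=
    by simpa using ((hasDerivAt_id l).smul_const v).const_add z
  have := (hh (z + l • v)).hasFDerivAt.comp_hasDerivAt l h1
  exact this

theorem myBound {h : (Fin n → ℂ) → ℂ} (hh : Differentiable ℂ h) {z₀ : Fin n → ℂ} {R M : ℝ}
    (hR : 0 < R) (hM : ∀ x ∈ closedBall z₀ (2*R), ‖h x‖ ≤ M) :
    ∀ z ∈ ball z₀ R, ‖fderiv ℂ h z‖ ≤ M / R := by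
  intro z hz
  have hM0 : 0 ≤ M := le_trans (norm_nonneg _) (hM z₀ (by simp; positivity))
  apply ContinuousLinearMap.opNorm_le_bound _ (by positivity)
  intro v
  rcases eq_or_ne v 0 with rfl | hv
  · simp
  have hnv : 0 < ‖v‖ := norm_pos_iff.mpr hv
  set r : ℝ := R / ‖v‖ with hr
  have hrpos : 0 < r := by positivity
  have hg : Differentiable ℂ (fun w : ℂ => h (z + w • v)) :=
    fun l => (mySlice hh z v l).differentiableAt
  have key : ‖deriv (fun w : ℂ => h (z + w • v)) 0‖ ≤ M / r := by
    apply Complex.norm_deriv_le_of_forall_mem_sphere_norm_le hrpos hg.diffContOnCl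
    intro w hw
    apply hM
    simp only [mem_sphere_iff_norm, sub_zero] at hw
    simp only [mem_closedBall]
    have : dist (z + w • v) z₀ ≤ dist (z + w • v) z + dist z z₀ := dist_triangle _ _ _
    refine this.trans ?_
    have h1 : dist (z + w • v) z = ‖w • v‖ := by simp [dist_eq_norm]
    rw [h1, norm_smul, hw]
    have h2 : dist z z₀ ≤ R := (mem_ball.mp hz).le
    have h3 : r * ‖v‖ = R := by rw [hr]; field_simp
    nlinarith
  have hd : deriv (fun w : ℂ => h (z + w • v)) 0 = fderiv ℂ h z v := by
    have := (mySlice hh z v 0).deriv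
    simpa using this
  rw [hd] at key
  calc ‖fderiv ℂ h z v‖ ≤ M / r := key
    _ = M / R * ‖v‖ := by rw [hr]; field_simp

theorem myLip {h : (Fin n → ℂ) → ℂ} (hh : Differentiable ℂ h) (z₀ : Fin n → ℂ) {R : ℝ}
    (hR : 0 < R) : ∃ K : ℝ, 0 ≤ K ∧
      ∀ x ∈ ball z₀ R, ∀ y ∈ ball z₀ R, ‖h x - h y‖ ≤ K * ‖x - y‖ := by
  obtain ⟨M, hM⟩ : ∃ M, ∀ x ∈ closedBall z₀ (2*R), ‖h x‖ ≤ M :=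
    (isCompact_closedBall z₀ (2*R)).exists_bound_of_continuousOn hh.continuous.continuousOn
  have hM0 : 0 ≤ M := le_trans (norm_nonneg _) (hM z₀ (by simp; positivity))
  refine ⟨M / R, by positivity, ?_⟩
  intro x hx y hy
  have := Convex.norm_image_sub_le_of_norm_fderiv_le
    (fun u (_ : u ∈ ball z₀ R) => hh u)
    (myBound hh hR hM) (convex_ball z₀ R) hy hx
  simpa using this

noncomputable def Fint {n : ℕ} (h : (Fin n → ℂ) → ℂ) (j : Fin n) (z : Fin n → ℂ) (θ : ℝ) : ℂ :=
  deriv (circleMap 0 1) θ • (circleMap 0 1 θ)⁻¹ • (circleMap 0 1 θ)⁻¹ •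
    h (z + circleMap 0 1 θ • (Pi.single j 1 : Fin n → ℂ))

theorem myRepr {h : (Fin n → ℂ) → ℂ} (hh : Differentiable ℂ h) (j : Fin n) (z : Fin n → ℂ) :
    fderiv ℂ h z (Pi.single j 1) =
      (2 * (Real.pi:ℂ) * Complex.I)⁻¹ • ∫ θ in Set.Ioc (0:ℝ) (2*Real.pi), Fint h j z θ := by
  set e : Fin n → ℂ := Pi.single j 1
  set g : ℂ → ℂ := fun w => h (z + w • e) with hgdef
  have hg : Differentiable ℂ g := fun l => (mySlice hh z e l).differentiableAt
  have h1 : deriv g 0 = fderiv ℂ h z e := by simpa using (mySlice hh z e 0).deriv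
  have hps := (hg.hasFPowerSeriesOnBall 0 (R := 1) one_pos).hasFPowerSeriesAt
  have h2 : deriv g 0 = (cauchyPowerSeries g 0 1).coeff 1 := hps.deriv
  rw [← h1, h2]
  have h3 : (cauchyPowerSeries g 0 1).coeff 1 =
      (2 * (Real.pi:ℂ) * Complex.I)⁻¹ • ∮ w in C(0, 1), (w - 0)⁻¹ ^ 1 • (w - 0)⁻¹ • g w := by
    simp [FormalMultilinearSeries.coeff, cauchyPowerSeries, ContinuousMultilinearMap.mkPiRing_apply]
  rw [h3]
  congr 1
  rw [circleIntegral, intervalIntegral.integral_of_le Real.two_pi_pos.le]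
  congr 1
  funext θ
  simp [Fint, hgdef, smul_smul, mul_assoc]
  rfl

theorem circleMap_one_ne_zero (θ : ℝ) : circleMap 0 1 θ ≠ 0 := by
  intro hzero
  have := norm_circleMap_zero 1 θ
  rw [hzero] at this
  simp at this

theorem myDj {h : (Fin n → ℂ) → ℂ} (hh : Differentiable ℂ h) (j : Fin n) :
    Differentiable ℂ (fun z => fderiv ℂ h z (Pi.single j 1)) := by
  set e : Fin n → ℂ := Pi.single j 1 with he
  set B : ℝ := ‖e‖ with hB
  intro z₀
  have hrepr : (fun z => fderiv ℂ h z e) =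
      fun z => (2 * (Real.pi:ℂ) * Complex.I)⁻¹ •
        ∫ θ in Set.Ioc (0:ℝ) (2*Real.pi), Fint h j z θ := funext fun z => myRepr hh j z
  rw [hrepr]
  apply DifferentiableAt.fun_const_smul
  set μ := MeasureTheory.volume.restrict (Set.Ioc (0:ℝ) (2*Real.pi)) with hμ
  obtain ⟨K, hK0, hKlip⟩ := myLip hh z₀ (R := 2 + B) (by positivity)
  have hcont : ∀ z, Continuous (fun θ => Fint h j z θ) := by
    intro z
    unfold Fint
    have h1 : Continuous (fun θ => deriv (circleMap 0 1) θ) := by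
      simp only [deriv_circleMap]
      exact (continuous_circleMap 0 1).mul continuous_const
    have h2 : Continuous (fun θ => (circleMap 0 1 θ)⁻¹) :=
      (continuous_circleMap 0 1).inv₀ circleMap_one_ne_zero
    have h3 : Continuous (fun θ : ℝ => h (z + circleMap 0 1 θ • e)) :=
      hh.continuous.comp (continuous_const.add ((continuous_circleMap 0 1).smul continuous_const))
    exact h1.smul (h2.smul (h2.smul h3))
  have hmem : ∀ (z : Fin n → ℂ), z ∈ ball z₀ 1 → ∀ (θ : ℝ),
      z + circleMap 0 1 θ • e ∈ ball z₀ (2 + B) := by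
    intro z hz θ
    rw [mem_ball] at hz ⊢
    have hb : dist (z + circleMap 0 1 θ • e) z ≤ B := by
      have h1 : dist (z + circleMap 0 1 θ • e) z = ‖circleMap 0 1 θ • e‖ := by
        simp [dist_eq_norm]
      have h2 : ‖circleMap 0 1 θ‖ = 1 := by
        simpa using norm_circleMap_zero 1 θ
      rw [h1, norm_smul, h2, one_mul]
    calc dist (z + circleMap 0 1 θ • e) z₀ ≤ dist (z + circleMap 0 1 θ • e) z + dist z z₀ :=
          dist_triangle _ _ _
      _ ≤ B + 1 := add_le_add hb hz.le
      _ < 2 + B := by linarith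
  have hcnorm : ∀ θ : ℝ, ‖deriv (circleMap 0 1) θ • (circleMap 0 1 θ)⁻¹ • (circleMap 0 1 θ)⁻¹ •
      (1:ℂ)‖ = 1 := by
    intro θ
    have h2 : ‖circleMap 0 1 θ‖ = 1 := by
      simpa using norm_circleMap_zero 1 θ
    simp only [smul_eq_mul, mul_one, norm_mul, deriv_circleMap, norm_inv, h2]
    simp
  set F' : ℝ → (Fin n → ℂ) →L[ℂ] ℂ := fun θ =>
    deriv (circleMap 0 1) θ • (circleMap 0 1 θ)⁻¹ • (circleMap 0 1 θ)⁻¹ •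
      fderiv ℂ h (z₀ + circleMap 0 1 θ • e) with hF'
  have main := hasFDerivAt_integral_of_dominated_loc_of_lip (μ := μ)
    (F := fun z θ => Fint h j z θ) (F' := F') (x₀ := z₀) (bound := fun _ => K)
    (s := ball z₀ 1) (ball_mem_nhds z₀ one_pos)
    (Filter.Eventually.of_forall fun z => (hcont z).aestronglyMeasurable)
    ((hcont z₀).integrableOn_Ioc)
    ?_ ?_ ?_ ?_
  · exact main.2.differentiableAt
  · -- F' measurable
    letI : MeasurableSpace ((Fin n → ℂ) →L[ℂ] ℂ) := borel _
    haveI : BorelSpace ((Fin n → ℂ) →L[ℂ] ℂ) := ⟨rfl⟩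
    have m1 : MeasureTheory.AEStronglyMeasurable (fun θ => deriv (circleMap 0 1) θ) μ :=
      Continuous.aestronglyMeasurable (by
        simp only [deriv_circleMap]
        exact (continuous_circleMap 0 1).mul continuous_const)
    have m2 : MeasureTheory.AEStronglyMeasurable (fun θ => (circleMap 0 1 θ)⁻¹) μ :=
      ((continuous_circleMap 0 1).inv₀ circleMap_one_ne_zero).aestronglyMeasurable
    have m3 : MeasureTheory.AEStronglyMeasurable
        (fun θ => fderiv ℂ h (z₀ + circleMap 0 1 θ • e)) μ :=
      ((measurable_fderiv ℂ h).comp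
        ((continuous_const.add ((continuous_circleMap 0 1).smul
          continuous_const)).measurable)).aestronglyMeasurable
    exact m1.smul (m2.smul (m2.smul m3))
  · -- Lipschitz
    apply MeasureTheory.ae_of_all
    intro θ
    apply LipschitzOnWith.of_dist_le_mul
    intro x hx y hy
    have hd : dist (Fint h j x θ) (Fint h j y θ) =
        ‖deriv (circleMap 0 1) θ • (circleMap 0 1 θ)⁻¹ • (circleMap 0 1 θ)⁻¹ • (1:ℂ)‖ *
          ‖h (x + circleMap 0 1 θ • e) - h (y + circleMap 0 1 θ • e)‖ := by
      rw [dist_eq_norm]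
      unfold Fint
      rw [← norm_mul]
      congr 1
      simp only [smul_eq_mul, mul_one]
      ring
    rw [hd, hcnorm θ, one_mul]
    have := hKlip _ (hmem x hx θ) _ (hmem y hy θ)
    calc ‖h (x + circleMap 0 1 θ • e) - h (y + circleMap 0 1 θ • e)‖
        ≤ K * ‖(x + circleMap 0 1 θ • e) - (y + circleMap 0 1 θ • e)‖ := this
      _ = ↑(Real.nnabs K) * dist x y := by
          rw [dist_eq_norm, Real.coe_nnabs, _root_.abs_of_nonneg hK0]
          congr 2
          abel
  · -- bound integrable
    rw [hμ]
    rw [MeasureTheory.integrable_const_iff]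
    right
    infer_instance
  · -- HasFDerivAt
    apply MeasureTheory.ae_of_all
    intro θ
    have hinner : HasFDerivAt (fun z => h (z + circleMap 0 1 θ • e))
        (fderiv ℂ h (z₀ + circleMap 0 1 θ • e)) z₀ := by
      have := (hh (z₀ + circleMap 0 1 θ • e)).hasFDerivAt.comp z₀
        ((hasFDerivAt_id z₀).add_const (circleMap 0 1 θ • e))
      simp at this; exact this
    exact ((hinner.fun_const_smul _).fun_const_smul _).fun_const_smul _

theorem myFderivDiff {h : (Fin n → ℂ) → ℂ} (hh : Differentiable ℂ h) :
    Differentiable ℂ (fderiv ℂ h) := by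
  have hrep : fderiv ℂ h = fun z => ∑ j : Fin n, (fderiv ℂ h z (Pi.single j 1)) •
      (ContinuousLinearMap.proj j : ((Fin n → ℂ)) →L[ℂ] ℂ) := by
    funext z
    ext v
    have hv : v = ∑ j : Fin n, v j • (Pi.single j 1 : Fin n → ℂ) := by
      funext x
      simp [Pi.single_apply, Finset.sum_apply, smul_eq_mul, mul_ite, Finset.sum_ite_eq']
    conv_lhs => rw [hv]
    simp only [map_sum, map_smul, ContinuousLinearMap.sum_apply, ContinuousLinearMap.smul_apply,
      ContinuousLinearMap.proj_apply, smul_eq_mul]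
    ring_nf
    congr 1
    funext j
    ring
  rw [hrep]
  apply Differentiable.fun_sum
  intro j _
  exact (myDj hh j).smul_const _

theorem constOn {𝒟 : Set ℂ} (hopen : IsOpen 𝒟) (hconn : IsConnected 𝒟) {ψ : ℂ → ℂ}
    (hd : ∀ t ∈ 𝒟, HasDerivAt ψ 0 t) : ∃ c, ∀ t ∈ 𝒟, ψ t = c := by
  obtain ⟨t₀, ht₀⟩ := hconn.nonempty
  refine ⟨ψ t₀, ?_⟩
  have hψ : DifferentiableOn ℂ ψ 𝒟 := fun t ht => (hd t ht).differentiableAt.differentiableWithinAt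
  have han : AnalyticOnNhd ℂ ψ 𝒟 := hψ.analyticOnNhd hopen
  obtain ⟨r, hr, hball⟩ := Metric.isOpen_iff.mp hopen t₀ ht₀
  have hconst : ∀ t ∈ ball t₀ r, ψ t = ψ t₀ := by
    intro t ht
    apply Convex.is_const_of_fderivWithin_eq_zero (convex_ball t₀ r)
      (fun x hx => ((hd x (hball hx)).differentiableAt).differentiableWithinAt)
      ?_ ht (mem_ball_self hr)
    intro x hx
    rw [fderivWithin_of_isOpen isOpen_ball hx]
    have := (hd x (hball hx)).hasFDerivAt.fderiv
    rw [this]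
    ext
    simp
  have hev : ψ =ᶠ[nhds t₀] (fun _ => ψ t₀) :=
    Filter.eventuallyEq_iff_exists_mem.mpr ⟨ball t₀ r, Metric.ball_mem_nhds t₀ hr, hconst⟩
  exact fun t ht =>
    han.eqOn_of_preconnected_of_eventuallyEq analyticOnNhd_const hconn.isPreconnected ht₀ hev ht

end AuxHartogs

/-- The derivative of a function `f` along a vector field `Q`: `(Qf)(z) = Σⱼ qⱼ ∂f/∂zⱼ (z)`. -/
noncomputable def lieDeriv {n : ℕ} (Q : (Fin n → ℂ) → (Fin n → ℂ))
    (f : (Fin n → ℂ) → ℂ) : (Fin n → ℂ) → ℂ :=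
  fun z => fderiv ℂ f z (Q z)

/-- Let `Q` be a holomorphic vector field on ℂⁿ with `Q(0) = 0`, let `S = φ(𝒟)` be a
nonconstant complex orbit of `Q` with `0 ∈ closure S` and `Q ≠ 0` on `S`, and let `f` be a
holomorphic polynomial with `f(0) = 0`.  If `Q^α f = 0` identically on ℂⁿ for some `α ≥ 1`,
then `f` vanishes identically on `S`. -/
theorem stmt_9 (n : ℕ) (Q : (Fin n → ℂ) → (Fin n → ℂ)) (hQdiff : Differentiable ℂ Q)
    (hQ0 : Q 0 = 0)
    (𝒟 : Set ℂ) (φ : ℂ → (Fin n → ℂ))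
    (hopen : IsOpen 𝒟) (hconn : IsConnected 𝒟) (hdiff : DifferentiableOn ℂ φ 𝒟)
    (hODE : ∀ t ∈ 𝒟, deriv φ t = Q (φ t))
    (hnonconst : ¬ ∃ c, ∀ t ∈ 𝒟, φ t = c)
    (hcl : (0 : Fin n → ℂ) ∈ closure (φ '' 𝒟))
    (hQne : ∀ z ∈ φ '' 𝒟, Q z ≠ 0)
    (F : MvPolynomial (Fin n) ℂ)
    (hF0 : MvPolynomial.eval (0 : Fin n → ℂ) F = 0)
    (α : ℕ) (hα : 1 ≤ α)
    (hvanish : (lieDeriv Q)^[α] (fun z => MvPolynomial.eval z F) = 0) :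
    ∀ z ∈ φ '' 𝒟, MvPolynomial.eval z F = 0 := by
  set f : (Fin n → ℂ) → ℂ := fun z => MvPolynomial.eval z F with hf
  set g : ℕ → (Fin n → ℂ) → ℂ := fun k => (lieDeriv Q)^[k] f with hg
  have hgsucc : ∀ k, g (k+1) = lieDeriv Q (g k) := by
    intro k
    simp only [hg, Function.iterate_succ_apply']
  have hdiffg : ∀ k, Differentiable ℂ (g k) := by
    intro k
    induction k with
    | zero =>
      have han := AnalyticOnNhd.eval_mvPolynomial (𝕜 := ℂ) F
      intro z
      exact ((han z trivial).differentiableAt)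
    | succ k ih =>
      rw [hgsucc]
      intro z
      exact DifferentiableAt.clm_apply (myFderivDiff ih z) (hQdiff z)
  have hg0 : ∀ k, g k 0 = 0 := by
    intro k
    cases k with
    | zero =>
      show (lieDeriv Q)^[0] f 0 = 0
      simpa [hf] using hF0
    | succ k =>
      rw [hgsucc]
      simp [lieDeriv, hQ0]
  have key : ∀ m, m ≤ α → ∀ z ∈ φ '' 𝒟, g (α - m) z = 0 := by
    intro m
    induction m with
    | zero =>
      intro _ z _
      simp only [Nat.sub_zero, hg, hvanish, Pi.zero_apply]
    | succ m ih =>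
      intro hm z hz
      have hmα : m ≤ α := Nat.le_of_succ_le hm
      have hkk : (α - (m+1)) + 1 = α - m := by omega
      have hvan : ∀ w ∈ φ '' 𝒟, lieDeriv Q (g (α - (m+1))) w = 0 := by
        intro w hw
        have h1 := ih hmα w hw
        rwa [← hkk, hgsucc] at h1
      have hder : ∀ t ∈ 𝒟, HasDerivAt (fun t => g (α - (m+1)) (φ t)) 0 t := by
        intro t ht
        have hφt : HasDerivAt φ (Q (φ t)) t := by
          have h2 : DifferentiableAt ℂ φ t := hdiff.differentiableAt (hopen.mem_nhds ht)
          have h3 := h2.hasDerivAt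
          rwa [hODE t ht] at h3
        have h4 := ((hdiffg (α - (m+1)) (φ t)).hasFDerivAt).comp_hasDerivAt t hφt
        have h0 : fderiv ℂ (g (α - (m+1))) (φ t) (Q (φ t)) = 0 := hvan (φ t) ⟨t, ht, rfl⟩
        rw [h0] at h4
        exact h4
      obtain ⟨c, hc⟩ := constOn hopen hconn hder
      have hEq : Set.EqOn (g (α - (m+1))) (fun _ => c) (closure (φ '' 𝒟)) := by
        apply Set.EqOn.closure (fun w hw => ?_) (hdiffg _).continuous continuous_const
        obtain ⟨t, ht, rfl⟩ := hw
        exact hc t ht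
      have hc0 : c = 0 := by
        have h5 := hEq hcl
        rw [hg0 (α - (m+1))] at h5
        exact h5.symm
      obtain ⟨t, ht, rfl⟩ := hz
      rw [hc t ht, hc0]
  have hfin := key α le_rfl
  intro z hz
  have := hfin z hz
  simpa [hg, hf] using this
end

section
/- Suppose the balanced polynomial p⁽⁰⁾ (the signature-zero part of a weighted homogeneous real polynomial p of weight μ) admits no nonzero holomorphic polynomial vector field R with R p⁽⁰⁾ = 0. If l₁,…,l_n are weighted homogeneous holomorphic polynomials with wt(l_k) = δ_k, and p + Σ_k l_k ∂p/∂z_k = 0 identically, then l_k = −(2/μ) δ_k z_k for all k, and p is balanced. -/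
open Complex

/-- The weight `wt(A) = Σⱼ aⱼ δⱼ` of a multi-index. -/
noncomputable def wtOf {n : ℕ} (δ : Fin n → ℝ) (A : Fin n →₀ ℕ) : ℝ :=
  ∑ j, (A j : ℝ) * δ j

/-- The polynomial `Σ c_{A,B} y^A w^B` in the separated variables `(y, w)`;
`p(z,z̄)` is recovered as `polyFun c z (star z)`. -/
noncomputable def polyFun {n : ℕ} (c : ((Fin n →₀ ℕ) × (Fin n →₀ ℕ)) → ℂ) :
    (Fin n → ℂ) → (Fin n → ℂ) → ℂ :=
  fun y w => ∑ᶠ AB : (Fin n →₀ ℕ) × (Fin n →₀ ℕ),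
    c AB * (∏ j, y j ^ AB.1 j) * (∏ j, w j ^ AB.2 j)

/-- The Wirtinger derivative `∂p/∂zⱼ` of `p(z,z̄) = Σ c_{A,B} z^A z̄^B`. -/
noncomputable def wirtinger {n : ℕ} (c : ((Fin n →₀ ℕ) × (Fin n →₀ ℕ)) → ℂ)
    (j : Fin n) (z : Fin n → ℂ) : ℂ :=
  fderiv ℂ (fun y => polyFun c y (star z)) z (Pi.single j 1)


namespace BP
open MvPolynomial Finset
variable {n : ℕ}

abbrev MI (n : ℕ) := (Fin n →₀ ℕ) × (Fin n →₀ ℕ)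

noncomputable def em (AB : MI n) : Fin n ⊕ Fin n →₀ ℕ :=
  AB.1.mapDomain Sum.inl + AB.2.mapDomain Sum.inr

lemma em_inl (AB : MI n) (j : Fin n) : em AB (Sum.inl j) = AB.1 j := by
  have h2 : (Finsupp.mapDomain Sum.inr AB.2) (Sum.inl j) = 0 :=
    Finsupp.mapDomain_notin_range AB.2 (Sum.inl j) (by rintro ⟨x, hx⟩; exact Sum.inr_ne_inl hx)
  simp [em, Finsupp.mapDomain_apply Sum.inl_injective, h2]

lemma em_inr (AB : MI n) (j : Fin n) : em AB (Sum.inr j) = AB.2 j := by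
  have h1 : (Finsupp.mapDomain Sum.inl AB.1) (Sum.inr j) = 0 :=
    Finsupp.mapDomain_notin_range AB.1 (Sum.inr j) (by rintro ⟨x, hx⟩; exact Sum.inl_ne_inr hx)
  simp [em, Finsupp.mapDomain_apply Sum.inr_injective, h1]

lemma em_injective : Function.Injective (em (n := n)) := by
  intro AB CD h
  have h1 : AB.1 = CD.1 := Finsupp.ext fun j => by
    rw [← em_inl AB j, ← em_inl CD j, h]
  have h2 : AB.2 = CD.2 := Finsupp.ext fun j => by
    rw [← em_inr AB j, ← em_inr CD j, h]
  exact Prod.ext h1 h2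

def mono (A : Fin n →₀ ℕ) (z : Fin n → ℂ) : ℂ := ∏ j, z j ^ A j

def dmono (A : Fin n →₀ ℕ) (k : Fin n) (z : Fin n → ℂ) : ℂ :=
  (A k : ℂ) * z k ^ (A k - 1) * ∏ j ∈ Finset.univ.erase k, z j ^ A j

noncomputable def Pd (S : Finset (MI n)) (d : MI n → ℂ) : MvPolynomial (Fin n ⊕ Fin n) ℂ :=
  ∑ AB ∈ S, monomial (em AB) (d AB)

noncomputable def DPd (S : Finset (MI n)) (d : MI n → ℂ) (k : Fin n) :
    MvPolynomial (Fin n ⊕ Fin n) ℂ :=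
  ∑ AB ∈ S, monomial (em AB - Finsupp.single (Sum.inl k) 1) ((AB.1 k : ℂ) * d AB)

lemma eval_monomial_em (AB : MI n) (a : ℂ) (y w : Fin n → ℂ) :
    eval (Sum.elim y w) (monomial (em AB) a) = a * mono AB.1 y * mono AB.2 w := by
  rw [eval_monomial, em, Finsupp.prod_add_index (by simp) (by intros; rw [pow_add]),
    Finsupp.prod_mapDomain_index_inj Sum.inl_injective,
    Finsupp.prod_mapDomain_index_inj Sum.inr_injective,
    Finsupp.prod_fintype _ _ (by simp), Finsupp.prod_fintype _ _ (by simp)]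
  simp [mono, mul_assoc]

lemma eval_Pd (S : Finset (MI n)) (d : MI n → ℂ) (y w : Fin n → ℂ) :
    eval (Sum.elim y w) (Pd S d) = ∑ AB ∈ S, d AB * mono AB.1 y * mono AB.2 w := by
  rw [Pd, map_sum]
  exact Finset.sum_congr rfl fun AB _ => eval_monomial_em AB (d AB) y w

lemma polyFun_eq (d : MI n → ℂ) (S : Finset (MI n)) (hS : Function.support d ⊆ S)
    (y w : Fin n → ℂ) :
    polyFun d y w = ∑ AB ∈ S, d AB * mono AB.1 y * mono AB.2 w := by
  apply finsum_eq_sum_of_support_subset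
  intro AB h
  apply hS
  intro h0
  exact h (by simp [h0])

lemma em_sub_single (AB : MI n) (k : Fin n) (hk : AB.1 k ≠ 0) :
    (em AB - Finsupp.single (Sum.inl k) 1) + Finsupp.single (Sum.inl k) 1 = em AB := by
  ext i
  simp only [Finsupp.add_apply, Finsupp.tsub_apply]
  apply Nat.sub_add_cancel
  rcases i with j | j
  · rw [em_inl]
    rcases eq_or_ne (Sum.inl j : Fin n ⊕ Fin n) (Sum.inl k) with h | h
    · simp only [Sum.inl.injEq] at h; subst h
      simpa [Finsupp.single_apply] using Nat.one_le_iff_ne_zero.2 hk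
    · simp [Finsupp.single_apply, Ne.symm (by simpa using h)]
  · simp [Finsupp.single_apply]

lemma eval_DPd_term (AB : MI n) (k : Fin n) (a : ℂ) (y w : Fin n → ℂ) :
    eval (Sum.elim y w) (monomial (em AB - Finsupp.single (Sum.inl k) 1) ((AB.1 k : ℂ) * a))
      = a * dmono AB.1 k y * mono AB.2 w := by
  rcases eq_or_ne (AB.1 k) 0 with h0 | h0
  · simp [h0, dmono]
  · have key : em AB - Finsupp.single (Sum.inl k) 1 = em (AB.1 - Finsupp.single k 1, AB.2) := by
      ext i
      rcases i with j | j
      · rcases eq_or_ne j k with rfl | h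
        · simp [em_inl, Finsupp.single_apply]
        · have : (Sum.inl j : Fin n ⊕ Fin n) ≠ Sum.inl k := by simpa using h
          simp [em_inl, Finsupp.single_apply, Ne.symm h, Ne.symm this]
      · simp [em_inr, Finsupp.single_apply]
    rw [key, eval_monomial_em]
    have hm : mono (AB.1 - Finsupp.single k 1) y
        = y k ^ (AB.1 k - 1) * ∏ j ∈ Finset.univ.erase k, y j ^ AB.1 j := by
      rw [mono, ← Finset.mul_prod_erase Finset.univ _ (Finset.mem_univ k)]
      congr 1
      · simp [Finsupp.single_apply]
      · exact Finset.prod_congr rfl fun j hj => by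
          simp [Finsupp.single_apply, Ne.symm (Finset.ne_of_mem_erase hj)]
    rw [hm, dmono]
    ring

lemma eval_DPd (S : Finset (MI n)) (d : MI n → ℂ) (k : Fin n) (y w : Fin n → ℂ) :
    eval (Sum.elim y w) (DPd S d k) = ∑ AB ∈ S, d AB * dmono AB.1 k y * mono AB.2 w := by
  rw [DPd, map_sum]
  exact Finset.sum_congr rfl fun AB _ => eval_DPd_term AB k (d AB) y w

lemma hasFDerivAt_mono (A : Fin n →₀ ℕ) (z : Fin n → ℂ) :
    HasFDerivAt (mono A)
      ((∑ j : Fin n, (∏ i ∈ Finset.univ.erase j, z i ^ A i) •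
        ((A j : ℂ) * z j ^ (A j - 1)) • (ContinuousLinearMap.proj j :
          (Fin n → ℂ) →L[ℂ] ℂ) : (Fin n → ℂ) →L[ℂ] ℂ)) z := by
  have h : ∀ j ∈ Finset.univ, HasFDerivAt (fun y : Fin n → ℂ => y j ^ A j)
      (((A j : ℂ) * z j ^ (A j - 1)) • (ContinuousLinearMap.proj j :
        (Fin n → ℂ) →L[ℂ] ℂ)) z := by
    intro j _
    have hg : HasDerivAt (fun u : ℂ => u ^ A j) ((A j : ℂ) * z j ^ (A j - 1)) (z j) :=
      hasDerivAt_pow (A j) (z j)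
    exact hg.comp_hasFDerivAt z (hasFDerivAt_apply (𝕜 := ℂ) j z)
  exact HasFDerivAt.finset_prod h

lemma fderiv_mono_single (A : Fin n →₀ ℕ) (z : Fin n → ℂ) (k : Fin n) :
    (∑ j : Fin n, (∏ i ∈ Finset.univ.erase j, z i ^ A i) •
        ((A j : ℂ) * z j ^ (A j - 1)) • (ContinuousLinearMap.proj j :
          (Fin n → ℂ) →L[ℂ] ℂ)) (Pi.single k 1) = dmono A k z := by
  rw [ContinuousLinearMap.sum_apply]
  rw [Finset.sum_eq_single k]
  · simp [dmono]; ring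
  · intro j _ hj
    simp [Pi.single_apply, Ne.symm hj]
  · simp

lemma wirtinger_eq (d : MI n → ℂ) (S : Finset (MI n))
    (hS : Function.support d ⊆ S) (k : Fin n) (z : Fin n → ℂ) :
    wirtinger d k z = ∑ AB ∈ S, d AB * dmono AB.1 k z * mono AB.2 (star z) := by
  set w := star z with hw
  set DA : (Fin n →₀ ℕ) → (Fin n → ℂ) →L[ℂ] ℂ := fun A =>
    (∑ j : Fin n, (∏ i ∈ Finset.univ.erase j, z i ^ A i) •
        ((A j : ℂ) * z j ^ (A j - 1)) • (ContinuousLinearMap.proj j :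
          (Fin n → ℂ) →L[ℂ] ℂ) : (Fin n → ℂ) →L[ℂ] ℂ) with hDA
  have hfd : HasFDerivAt (fun y => polyFun d y w)
      (∑ AB ∈ S, mono AB.2 w • (d AB • DA AB.1)) z := by
    have : (fun y => polyFun d y w) = fun y => ∑ AB ∈ S, d AB * mono AB.1 y * mono AB.2 w := by
      funext y; exact polyFun_eq d S hS y w
    rw [this]
    apply HasFDerivAt.fun_sum
    intro AB _
    exact ((hasFDerivAt_mono AB.1 z).const_mul (d AB)).mul_const (mono AB.2 w)
  rw [wirtinger, hfd.fderiv, ContinuousLinearMap.sum_apply]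
  apply Finset.sum_congr rfl
  intro AB _
  rw [ContinuousLinearMap.smul_apply, ContinuousLinearMap.smul_apply, fderiv_mono_single]
  simp only [smul_eq_mul]
  ring

lemma euler_dmono (δ : Fin n → ℝ) (A : Fin n →₀ ℕ) (z : Fin n → ℂ) :
    ∑ k, (δ k : ℂ) * z k * dmono A k z = ((∑ j, (A j : ℝ) * δ j : ℝ) : ℂ) * mono A z := by
  push_cast
  rw [Finset.sum_mul]
  apply Finset.sum_congr rfl
  intro k _
  rcases eq_or_ne (A k) 0 with h0 | h0
  · simp [dmono, h0]
  · have hz : z k * z k ^ (A k - 1) = z k ^ A k := by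
      rw [← pow_succ']
      congr 1
      omega
    rw [dmono, mono, ← Finset.mul_prod_erase Finset.univ _ (Finset.mem_univ k), ← hz]
    ring

lemma euler_sum (δ : Fin n → ℝ) (d : MI n → ℂ) (S : Finset (MI n))
    (hS : Function.support d ⊆ S) (z : Fin n → ℂ) :
    ∑ k, (δ k : ℂ) * z k * wirtinger d k z
      = ∑ AB ∈ S, ((wtOf δ AB.1 : ℝ) : ℂ) * d AB * mono AB.1 z * mono AB.2 (star z) := by
  have h1 : ∀ k, wirtinger d k z = ∑ AB ∈ S, d AB * dmono AB.1 k z * mono AB.2 (star z) :=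
    fun k => wirtinger_eq d S hS k z
  calc ∑ k, (δ k : ℂ) * z k * wirtinger d k z
      = ∑ k, ∑ AB ∈ S, (δ k : ℂ) * z k * (d AB * dmono AB.1 k z * mono AB.2 (star z)) := by
        apply Finset.sum_congr rfl
        intro k _
        rw [h1 k, Finset.mul_sum]
    _ = ∑ AB ∈ S, ∑ k, (δ k : ℂ) * z k * (d AB * dmono AB.1 k z * mono AB.2 (star z)) :=
        Finset.sum_comm
    _ = ∑ AB ∈ S, ((wtOf δ AB.1 : ℝ) : ℂ) * d AB * mono AB.1 z * mono AB.2 (star z) := by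
        apply Finset.sum_congr rfl
        intro AB _
        have h2 : ∑ k, (δ k : ℂ) * z k * (d AB * dmono AB.1 k z * mono AB.2 (star z))
            = (d AB * mono AB.2 (star z)) * ∑ k, (δ k : ℂ) * z k * dmono AB.1 k z := by
          rw [Finset.mul_sum]
          apply Finset.sum_congr rfl
          intro k _
          ring
        rw [h2, euler_dmono, wtOf]
        ring

section Vanishing

lemma eval_real_zero : ∀ {m : ℕ} (P : MvPolynomial (Fin m) ℂ),
    (∀ x : Fin m → ℝ, eval (fun i => (x i : ℂ)) P = 0) → P = 0 := by
  intro m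
  induction m with
  | zero =>
    intro P h
    obtain ⟨a, rfl⟩ := C_surjective (Fin 0) P
    have := h (fun i => 0)
    rw [eval_C] at this
    rw [this, map_zero]
  | succ m ih =>
    intro P h
    have key : ∀ x : Fin m → ℝ,
        Polynomial.map (eval fun i => (x i : ℂ)) (finSuccEquiv ℂ m P) = 0 := by
      intro x
      apply Polynomial.eq_zero_of_infinite_isRoot
      apply Set.Infinite.mono (s := Set.range (fun r : ℝ => (r : ℂ)))
      · rintro _ ⟨r, rfl⟩
        have hc : (fun i => ((Fin.cons r x : Fin (m+1) → ℝ) i : ℂ))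
            = Fin.cons (r : ℂ) (fun i => (x i : ℂ)) := by
          funext i
          refine Fin.cases ?_ ?_ i <;> simp
        have := h (Fin.cons r x)
        rw [hc, eval_eq_eval_mv_eval'] at this
        exact this
      · exact Set.infinite_range_of_injective Complex.ofReal_injective
    have hco : ∀ i : ℕ, (finSuccEquiv ℂ m P).coeff i = 0 := by
      intro i
      apply ih
      intro x
      have := key x
      have h2 := congrArg (fun q => Polynomial.coeff q i) this
      simpa using h2
    have : finSuccEquiv ℂ m P = 0 := Polynomial.ext fun i => by
      rw [hco i, Polynomial.coeff_zero]
    apply (finSuccEquiv ℂ m).injective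
    rw [this, map_zero]

noncomputable def toRe (n : ℕ) :
    MvPolynomial (Fin n ⊕ Fin n) ℂ →ₐ[ℂ] MvPolynomial (Fin n ⊕ Fin n) ℂ :=
  aeval (Sum.elim (fun j => X (Sum.inl j) + C I * X (Sum.inr j))
    (fun j => X (Sum.inl j) - C I * X (Sum.inr j)))

noncomputable def toZ (n : ℕ) :
    MvPolynomial (Fin n ⊕ Fin n) ℂ →ₐ[ℂ] MvPolynomial (Fin n ⊕ Fin n) ℂ :=
  aeval (Sum.elim (fun j => C (1/2 : ℂ) * (X (Sum.inl j) + X (Sum.inr j)))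
    (fun j => C (-I/2) * (X (Sum.inl j) - X (Sum.inr j))))

lemma CI_mul_CnegI2 : (C I : MvPolynomial (Fin n ⊕ Fin n) ℂ) * C (-I/2) = C (1/2) := by
  rw [← map_mul]
  congr 1
  rw [div_eq_mul_inv]
  ring_nf
  rw [Complex.I_sq]
  norm_num

lemma half_smul_key (a b : MvPolynomial (Fin n ⊕ Fin n) ℂ) :
    C (1/2 : ℂ) * (a + b) + C (1/2 : ℂ) * (a - b) = a := by
  have h2 : (2 : MvPolynomial (Fin n ⊕ Fin n) ℂ) = C 2 := (map_ofNat C 2).symm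
  calc C (1/2:ℂ) * (a + b) + C (1/2:ℂ) * (a - b) = C (1/2:ℂ) * 2 * a := by ring
    _ = C (1/2:ℂ) * C 2 * a := by rw [h2]
    _ = C 1 * a := by rw [← map_mul]; norm_num
    _ = a := by rw [map_one, one_mul]

lemma half_smul_key' (a b : MvPolynomial (Fin n ⊕ Fin n) ℂ) :
    C (1/2 : ℂ) * (a + b) - C (1/2 : ℂ) * (a - b) = b := by
  calc C (1/2:ℂ) * (a + b) - C (1/2:ℂ) * (a - b)
      = C (1/2:ℂ) * (b + a) + C (1/2:ℂ) * (b - a) := by ring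
    _ = b := half_smul_key b a

lemma toZ_comp_toRe (F : MvPolynomial (Fin n ⊕ Fin n) ℂ) : toZ n (toRe n F) = F := by
  have : (toZ n).comp (toRe n) = AlgHom.id ℂ _ := by
    apply MvPolynomial.algHom_ext
    intro i
    have hI : (algebraMap ℂ (MvPolynomial (Fin n ⊕ Fin n) ℂ)) I = C I := rfl
    rcases i with j | j
    · simp only [toRe, toZ, AlgHom.comp_apply, AlgHom.id_apply, aeval_X, Sum.elim_inl,
        Sum.elim_inr, map_add, map_sub, map_mul, aeval_C, hI]
      rw [← mul_assoc, CI_mul_CnegI2]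
      exact half_smul_key _ _
    · simp only [toRe, toZ, AlgHom.comp_apply, AlgHom.id_apply, aeval_X, Sum.elim_inl,
        Sum.elim_inr, map_add, map_sub, map_mul, aeval_C, hI]
      rw [← mul_assoc, CI_mul_CnegI2]
      exact half_smul_key' _ _
  have h2 := congrArg (fun φ => φ F) (congrArg (fun ψ => ψ.toFun) this)
  simpa using h2

lemma vanishing (F : MvPolynomial (Fin n ⊕ Fin n) ℂ)
    (h : ∀ z : Fin n → ℂ, eval (Sum.elim z (star z)) F = 0) : F = 0 := by
  have hre : ∀ x : Fin n ⊕ Fin n → ℝ, eval (fun i => (x i : ℂ)) (toRe n F) = 0 := by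
    intro x
    have hev : ∀ (p : MvPolynomial (Fin n ⊕ Fin n) ℂ) (v : Fin n ⊕ Fin n → ℂ),
        eval v p = (aeval v : MvPolynomial (Fin n ⊕ Fin n) ℂ →ₐ[ℂ] ℂ) p := fun p v => rfl
    rw [toRe, hev, comp_aeval_apply
      (f := (Sum.elim (fun j => X (Sum.inl j) + C I * X (Sum.inr j))
        (fun j => X (Sum.inl j) - C I * X (Sum.inr j)) : _ → MvPolynomial (Fin n ⊕ Fin n) ℂ))
      (aeval (fun i => (x i : ℂ)) : MvPolynomial (Fin n ⊕ Fin n) ℂ →ₐ[ℂ] ℂ)]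
    set z : Fin n → ℂ := fun j => (x (Sum.inl j) : ℂ) + I * (x (Sum.inr j) : ℂ) with hz
    have harg : (fun i => (aeval (fun i => (x i : ℂ)) : MvPolynomial (Fin n ⊕ Fin n) ℂ →ₐ[ℂ] ℂ)
        ((Sum.elim (fun j => X (Sum.inl j) + C I * X (Sum.inr j))
          (fun j => X (Sum.inl j) - C I * X (Sum.inr j)) : _ → MvPolynomial (Fin n ⊕ Fin n) ℂ) i))
        = Sum.elim z (star z) := by
      funext i
      rcases i with j | j
      · simp [hz]
      · simp only [Sum.elim_inr, map_sub, map_mul, aeval_X, aeval_C]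
        have hst : (star z : Fin n → ℂ) j = (x (Sum.inl j) : ℂ) - I * (x (Sum.inr j) : ℂ) := by
          have h1 : (star z : Fin n → ℂ) j = starRingEnd ℂ (z j) := rfl
          rw [h1, hz]
          simp only [map_add, map_mul, conj_ofReal, conj_I]
          ring
        rw [hst]
        simp
    rw [harg, ← hev]
    exact h z
  have hzero : toRe n F = 0 := by
    set e : (Fin n ⊕ Fin n) ≃ Fin (n + n) := finSumFinEquiv with he
    have : rename e (toRe n F) = 0 := by
      apply eval_real_zero
      intro x
      rw [eval_rename]
      exact hre (fun i => x (e i))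
    have h2 := congrArg (rename (e.symm : Fin (n+n) → Fin n ⊕ Fin n)) this
    rw [rename_rename] at h2
    simpa [Equiv.symm_comp_self] using h2
  have := congrArg (toZ n) hzero
  rw [toZ_comp_toRe, map_zero] at this
  exact this

end Vanishing

section Scale

lemma aeval_scale_monomial (s : Fin n → ℂ) (v : Fin n →₀ ℕ) (a : ℂ) :
    aeval (fun j => C (s j) * X j) (monomial v a)
      = monomial v ((∏ j, s j ^ v j) * a) := by
  rw [aeval_monomial]
  have h1 : (v.prod fun j k => (C (s j) * X j : MvPolynomial (Fin n) ℂ) ^ k)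
      = C (∏ j, s j ^ v j) * v.prod fun j k => (X j : MvPolynomial (Fin n) ℂ) ^ k := by
    have : ∀ j k, (C (s j) * X j : MvPolynomial (Fin n) ℂ) ^ k
        = C (s j ^ k) * X j ^ k := by
      intro j k
      rw [mul_pow, C_pow]
    rw [Finsupp.prod_congr (g2 := fun j k => C (s j ^ k) * X j ^ k) (fun j _ => this j (v j))]
    rw [Finsupp.prod_mul]
    congr 1
    rw [Finsupp.prod_fintype _ _ (by simp), ← map_prod]
  have halg : (algebraMap ℂ (MvPolynomial (Fin n) ℂ)) a = C a := rfl
  rw [h1, halg, monomial_eq, map_mul]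
  ring

lemma coeff_scale (s : Fin n → ℂ) (q : MvPolynomial (Fin n) ℂ) (m : Fin n →₀ ℕ) :
    coeff m (aeval (fun j => C (s j) * X j) q) = (∏ j, s j ^ m j) * coeff m q := by
  conv_lhs => rw [q.as_sum]
  rw [map_sum, coeff_sum]
  rw [Finset.sum_congr rfl (fun v _ => congrArg (coeff m) (aeval_scale_monomial s v (coeff v q)))]
  simp only [coeff_monomial]
  rcases Finset.decidableMem m q.support with h | h
  · rw [Finset.sum_eq_zero]
    · rw [MvPolynomial.notMem_support_iff.1 (by exact h), mul_zero]
    · intro v hv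
      have : v ≠ m := fun hvm => h (hvm ▸ hv)
      simp [this]
  · rw [Finset.sum_eq_single m]
    · simp
    · intro v _ hvm
      simp [hvm]
    · intro hm
      exact absurd h hm

lemma support_wt (δ : Fin n → ℝ) (q : MvPolynomial (Fin n) ℂ) (dk : ℝ)
    (hq : ∀ z : Fin n → ℂ, eval (fun j => (((2:ℝ) ^ δ j : ℝ) : ℂ) * z j) q
      = (((2:ℝ) ^ dk : ℝ) : ℂ) * eval z q) :
    ∀ v ∈ q.support, wtOf δ v = dk := by
  intro v hv
  set s : Fin n → ℂ := fun j => (((2:ℝ) ^ δ j : ℝ) : ℂ) with hs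
  have hpoly : aeval (fun j => C (s j) * X j) q = C (((2:ℝ) ^ dk : ℝ) : ℂ) * q := by
    apply MvPolynomial.funext
    intro z
    have hev : ∀ (p : MvPolynomial (Fin n) ℂ) (u : Fin n → ℂ),
        eval u p = (aeval u : MvPolynomial (Fin n) ℂ →ₐ[ℂ] ℂ) p := fun p u => rfl
    rw [hev, comp_aeval_apply (f := fun j => C (s j) * X j)
      (aeval z : MvPolynomial (Fin n) ℂ →ₐ[ℂ] ℂ) q]
    have harg : (fun j => (aeval z : MvPolynomial (Fin n) ℂ →ₐ[ℂ] ℂ) (C (s j) * X j))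
        = fun j => s j * z j := by
      funext j
      simp
    rw [harg, ← hev, eval_mul, eval_C]
    exact hq z
  have hco := congrArg (coeff v) hpoly
  rw [coeff_scale, coeff_C_mul] at hco
  have hcv : coeff v q ≠ 0 := MvPolynomial.mem_support_iff.1 hv
  have hkey : (∏ j, s j ^ v j) = (((2:ℝ) ^ dk : ℝ) : ℂ) := by
    exact mul_right_cancel₀ hcv hco
  have hreal : (∏ j, ((2:ℝ) ^ δ j) ^ (v j) : ℝ) = (2:ℝ) ^ dk := by
    have : ((∏ j, ((2:ℝ) ^ δ j) ^ (v j) : ℝ) : ℂ) = (((2:ℝ) ^ dk : ℝ) : ℂ) := by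
      push_cast
      rw [← hkey]
    exact_mod_cast this
  have h2 : (0:ℝ) < 2 := by norm_num
  have hexp : ∀ j, ((2:ℝ) ^ δ j) ^ (v j) = Real.exp (Real.log 2 * δ j * (v j)) := by
    intro j
    rw [Real.rpow_def_of_pos h2, ← Real.exp_nat_mul]
    ring_nf
  rw [Finset.prod_congr rfl (fun j _ => hexp j), ← Real.exp_sum,
    Real.rpow_def_of_pos h2] at hreal
  have hlog := Real.exp_injective hreal
  have hl2 : Real.log 2 ≠ 0 := by
    have := Real.log_pos (by norm_num : (1:ℝ) < 2)
    linarith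
  have hsw : (∑ j, Real.log 2 * δ j * (v j : ℝ)) = Real.log 2 * ∑ j, (v j : ℝ) * δ j := by
    rw [Finset.mul_sum]
    apply Finset.sum_congr rfl
    intro j _
    ring
  rw [wtOf]
  apply mul_left_cancel₀ hl2
  rw [← hsw]
  exact hlog

end Scale

section Sig

noncomputable def sig (δ : Fin n → ℝ) (m : Fin n ⊕ Fin n →₀ ℕ) : ℝ :=
  ∑ j, ((m (Sum.inl j) : ℝ) - (m (Sum.inr j) : ℝ)) * δ j

lemma sig_em (δ : Fin n → ℝ) (AB : MI n) : sig δ (em AB) = wtOf δ AB.1 - wtOf δ AB.2 := by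
  rw [sig, wtOf, wtOf, ← Finset.sum_sub_distrib]
  apply Finset.sum_congr rfl
  intro j _
  rw [em_inl, em_inr]
  ring

lemma sig_add (δ : Fin n → ℝ) (m1 m2 : Fin n ⊕ Fin n →₀ ℕ) :
    sig δ (m1 + m2) = sig δ m1 + sig δ m2 := by
  rw [sig, sig, sig, ← Finset.sum_add_distrib]
  apply Finset.sum_congr rfl
  intro j _
  simp only [Finsupp.add_apply]
  push_cast
  ring

lemma sig_single_inl (δ : Fin n → ℝ) (k : Fin n) :
    sig δ (Finsupp.single (Sum.inl k) 1) = δ k := by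
  rw [sig]
  rw [Finset.sum_eq_single k]
  · simp [Finsupp.single_apply]
  · intro j _ hj
    have h1 : (Sum.inl k : Fin n ⊕ Fin n) ≠ Sum.inl j := by simpa using Ne.symm hj
    have h2 : (Sum.inl k : Fin n ⊕ Fin n) ≠ Sum.inr j := Sum.inl_ne_inr
    simp [Finsupp.single_apply, h1, h2]
  · simp

lemma sig_mapDomain_inl (δ : Fin n → ℝ) (u : Fin n →₀ ℕ) :
    sig δ (u.mapDomain Sum.inl) = wtOf δ u := by
  rw [sig, wtOf]
  apply Finset.sum_congr rfl
  intro j _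
  rw [Finsupp.mapDomain_apply Sum.inl_injective,
    Finsupp.mapDomain_notin_range u (Sum.inr j) (by rintro ⟨x, hx⟩; exact Sum.inl_ne_inr hx)]
  push_cast
  ring

end Sig

section Filter

variable (δ : Fin n → ℝ)

lemma coeff_Pd (S : Finset (MI n)) (d : MI n → ℂ) (m : Fin n ⊕ Fin n →₀ ℕ) :
    coeff m (Pd S d) = ∑ AB ∈ S, if em AB = m then d AB else 0 := by
  rw [Pd, coeff_sum]
  exact Finset.sum_congr rfl fun AB _ => coeff_monomial m (em AB) (d AB)

lemma coeff_DPd (S : Finset (MI n)) (d : MI n → ℂ) (k : Fin n) (m : Fin n ⊕ Fin n →₀ ℕ) :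
    coeff m (DPd S d k) = ∑ AB ∈ S,
      if em AB - Finsupp.single (Sum.inl k) 1 = m then (AB.1 k : ℂ) * d AB else 0 := by
  rw [DPd, coeff_sum]
  exact Finset.sum_congr rfl fun AB _ => coeff_monomial m _ _

lemma filter_Pd (S : Finset (MI n)) (c c0 : MI n → ℂ)
    (hbal : ∀ AB, c0 AB = if wtOf δ AB.1 = wtOf δ AB.2 then c AB else 0)
    (m : Fin n ⊕ Fin n →₀ ℕ) :
    coeff m (Pd S c0) = if sig δ m = 0 then coeff m (Pd S c) else 0 := by
  rw [coeff_Pd, coeff_Pd]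
  rcases eq_or_ne (sig δ m) 0 with h | h
  · rw [if_pos h]
    apply Finset.sum_congr rfl
    intro AB _
    rcases eq_or_ne (em AB) m with he | he
    · rw [if_pos he, if_pos he, hbal]
      have : wtOf δ AB.1 = wtOf δ AB.2 := by
        have := sig_em δ AB
        rw [he, h] at this
        linarith
      rw [if_pos this]
    · rw [if_neg he, if_neg he]
  · rw [if_neg h]
    apply Finset.sum_eq_zero
    intro AB _
    rcases eq_or_ne (em AB) m with he | he
    · rw [if_pos he, hbal]
      have hne : wtOf δ AB.1 ≠ wtOf δ AB.2 := by
        intro hw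
        apply h
        rw [← he, sig_em, hw]
        ring
      rw [if_neg hne]
    · rw [if_neg he]

lemma filter_DPd (S : Finset (MI n)) (c c0 : MI n → ℂ)
    (hbal : ∀ AB, c0 AB = if wtOf δ AB.1 = wtOf δ AB.2 then c AB else 0)
    (k : Fin n) (m : Fin n ⊕ Fin n →₀ ℕ) :
    coeff m (DPd S c0 k) = if sig δ m = -δ k then coeff m (DPd S c k) else 0 := by
  rw [coeff_DPd, coeff_DPd]
  have key : ∀ AB : MI n,
      (if em AB - Finsupp.single (Sum.inl k) 1 = m then (AB.1 k : ℂ) * c0 AB else 0)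
      = if sig δ m = -δ k then
          (if em AB - Finsupp.single (Sum.inl k) 1 = m then (AB.1 k : ℂ) * c AB else 0)
        else 0 := by
    intro AB
    rcases eq_or_ne (AB.1 k) 0 with hA | hA
    · simp [hA]
    · rcases eq_or_ne (em AB - Finsupp.single (Sum.inl k) 1) m with he | he
      · rw [if_pos he]
        have hsum := em_sub_single AB k hA
        rw [he] at hsum
        have hsig : sig δ m + δ k = wtOf δ AB.1 - wtOf δ AB.2 := by
          rw [← sig_em δ AB, ← hsum, sig_add, sig_single_inl]
        rcases eq_or_ne (sig δ m) (-δ k) with hs | hs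
        · rw [if_pos hs, if_pos he, hbal]
          have : wtOf δ AB.1 = wtOf δ AB.2 := by
            rw [hs] at hsig
            linarith
          rw [if_pos this]
        · rw [if_neg hs, hbal]
          have hne : wtOf δ AB.1 ≠ wtOf δ AB.2 := by
            intro hw
            apply hs
            rw [hw] at hsig
            linarith
          rw [if_neg hne, mul_zero]
      · rw [if_neg he]
        rcases eq_or_ne (sig δ m) (-δ k) with hs | hs
        · rw [if_pos hs, if_neg he]
        · rw [if_neg hs]
  rw [Finset.sum_congr rfl (fun AB _ => key AB)]
  rcases eq_or_ne (sig δ m) (-δ k) with hs | hs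
  · rw [if_pos hs]
    apply Finset.sum_congr rfl
    intro AB _
    rw [if_pos hs]
  · rw [if_neg hs]
    apply Finset.sum_eq_zero
    intro AB _
    rw [if_neg hs]

lemma filter_mul_DPd (S : Finset (MI n)) (c c0 : MI n → ℂ)
    (hbal : ∀ AB, c0 AB = if wtOf δ AB.1 = wtOf δ AB.2 then c AB else 0)
    (k : Fin n) (q : MvPolynomial (Fin n) ℂ) (hq : ∀ v ∈ q.support, wtOf δ v = δ k)
    (m : Fin n ⊕ Fin n →₀ ℕ) :
    coeff m (rename Sum.inl q * DPd S c0 k)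
      = if sig δ m = 0 then coeff m (rename Sum.inl q * DPd S c k) else 0 := by
  rw [coeff_mul, coeff_mul]
  have hsig1 : ∀ m1 : Fin n ⊕ Fin n →₀ ℕ, coeff m1 (rename Sum.inl q) ≠ 0 → sig δ m1 = δ k := by
    intro m1 h1
    obtain ⟨u, hu, hcu⟩ := coeff_rename_ne_zero _ _ _ h1
    rw [← hu, sig_mapDomain_inl]
    exact hq u (MvPolynomial.mem_support_iff.2 hcu)
  have key : ∀ p : (Fin n ⊕ Fin n →₀ ℕ) × (Fin n ⊕ Fin n →₀ ℕ),
      p ∈ Finset.HasAntidiagonal.antidiagonal m →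
      coeff p.1 (rename Sum.inl q) * coeff p.2 (DPd S c0 k)
      = if sig δ m = 0 then coeff p.1 (rename Sum.inl q) * coeff p.2 (DPd S c k) else 0 := by
    intro p hp
    have hm : p.1 + p.2 = m := Finset.HasAntidiagonal.mem_antidiagonal.1 hp
    rcases eq_or_ne (coeff p.1 (rename Sum.inl q)) 0 with h1 | h1
    · simp [h1]
    · have hs1 : sig δ p.1 = δ k := hsig1 p.1 h1
      have hsm : sig δ m = sig δ p.1 + sig δ p.2 := by rw [← hm, sig_add]
      rw [filter_DPd δ S c c0 hbal k p.2]
      rcases eq_or_ne (sig δ m) 0 with h0 | h0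
      · have : sig δ p.2 = -δ k := by rw [hsm, hs1] at h0; linarith
        rw [if_pos this, if_pos h0]
      · have : sig δ p.2 ≠ -δ k := by
          intro hc
          apply h0
          rw [hsm, hs1, hc]
          ring
        rw [if_neg this, if_neg h0, mul_zero]
  rw [Finset.sum_congr rfl key]
  rcases eq_or_ne (sig δ m) 0 with h0 | h0
  · rw [if_pos h0]
    apply Finset.sum_congr rfl
    intro p _
    rw [if_pos h0]
  · rw [if_neg h0]
    apply Finset.sum_eq_zero
    intro p _
    rw [if_neg h0]

lemma balanced (S : Finset (MI n)) (c c0 : MI n → ℂ)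
    (hbal : ∀ AB, c0 AB = if wtOf δ AB.1 = wtOf δ AB.2 then c AB else 0)
    (l : Fin n → MvPolynomial (Fin n) ℂ)
    (hlw : ∀ k, ∀ v ∈ (l k).support, wtOf δ v = δ k)
    (hF : Pd S c + ∑ k, rename Sum.inl (l k) * DPd S c k = 0) :
    Pd S c0 + ∑ k, rename Sum.inl (l k) * DPd S c0 k = 0 := by
  apply MvPolynomial.ext
  intro m
  rw [coeff_zero, coeff_add, filter_Pd δ S c c0 hbal m, coeff_sum]
  rw [Finset.sum_congr rfl (fun k _ => filter_mul_DPd δ S c c0 hbal k (l k) (hlw k) m)]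
  have hFc := congrArg (coeff m) hF
  rw [coeff_zero, coeff_add, coeff_sum] at hFc
  rcases eq_or_ne (sig δ m) 0 with h0 | h0
  · rw [if_pos h0, Finset.sum_congr rfl (fun k _ => if_pos h0)]
    exact hFc
  · rw [if_neg h0, Finset.sum_congr rfl (fun k _ => if_neg h0)]
    simp

end Filter

end BP

open MvPolynomial Finset BP

/-- Lemma 3.3 of Bedford–Pinchuk: let `p` be a real weighted homogeneous polynomial of
weight `μ` whose balanced part `p⁽⁰⁾` admits no nonzero holomorphic polynomial vector field
`R` with `R p⁽⁰⁾ = 0`.  If `l₁,…,lₙ` are weighted homogeneous holomorphic polynomials with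
`wt lₖ = δₖ` and `p + Σₖ lₖ ∂p/∂zₖ = 0` identically, then `lₖ = −(2/μ) δₖ zₖ` for all `k`
and `p` is balanced. -/
theorem stmt_10 (n : ℕ) (δ : Fin n → ℝ) (hδ : ∀ j, 0 < δ j) (μ : ℝ) (hμ : μ ≠ 0)
    (c : ((Fin n →₀ ℕ) × (Fin n →₀ ℕ)) → ℂ) (hfin : (Function.support c).Finite)
    -- reality of p:
    (hreal : ∀ A B, c (A, B) = starRingEnd ℂ (c (B, A)))
    -- weighted homogeneity of weight μ:
    (hhom : ∀ AB, c AB ≠ 0 → wtOf δ AB.1 + wtOf δ AB.2 = μ)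
    -- nondegeneracy (3.2) of the balanced part p⁽⁰⁾:
    (hnd : ¬ ∃ R : Fin n → MvPolynomial (Fin n) ℂ, (∃ j, R j ≠ 0) ∧
      ∀ z : Fin n → ℂ,
        (∑ j, MvPolynomial.eval z (R j) *
          wirtinger (fun AB => if wtOf δ AB.1 = wtOf δ AB.2 then c AB else 0) j z) = 0)
    (l : Fin n → MvPolynomial (Fin n) ℂ)
    -- each lₖ is weighted homogeneous of weight δₖ:
    (hl : ∀ k, ∀ t : ℝ, 0 < t → ∀ z : Fin n → ℂ,
      MvPolynomial.eval (fun j => ((t ^ δ j : ℝ) : ℂ) * z j) (l k)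
        = ((t ^ δ k : ℝ) : ℂ) * MvPolynomial.eval z (l k))
    -- the identity p + Σₖ lₖ ∂p/∂zₖ = 0:
    (hid : ∀ z : Fin n → ℂ,
      polyFun c z (star z) + ∑ k, MvPolynomial.eval z (l k) * wirtinger c k z = 0) :
    (∀ k, l k = MvPolynomial.C (((-(2 / μ) * δ k : ℝ)) : ℂ) * MvPolynomial.X k) ∧
    (∀ AB, c AB ≠ 0 → wtOf δ AB.1 = wtOf δ AB.2) := by
  classical
  set S : Finset (MI n) := hfin.toFinset with hSdef
  have hS : Function.support c ⊆ ↑S := by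
    intro AB h
    rw [hSdef, Set.Finite.coe_toFinset]
    exact h
  set c0 : MI n → ℂ := fun AB => if wtOf δ AB.1 = wtOf δ AB.2 then c AB else 0 with hc0
  have hS0 : Function.support c0 ⊆ ↑S := by
    intro AB h
    apply hS
    intro hc
    apply h
    simp [hc0, hc]
  have hlw : ∀ k, ∀ v ∈ (l k).support, wtOf δ v = δ k := fun k =>
    support_wt δ (l k) (δ k) (fun z => hl k 2 (by norm_num) z)
  have heval : ∀ (d : MI n → ℂ), Function.support d ⊆ ↑S → ∀ z : Fin n → ℂ,
      eval (Sum.elim z (star z)) (Pd S d + ∑ k, rename Sum.inl (l k) * DPd S d k)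
        = polyFun d z (star z) + ∑ k, eval z (l k) * wirtinger d k z := by
    intro d hd z
    rw [map_add, map_sum, eval_Pd, ← polyFun_eq d S hd]
    congr 1
    apply Finset.sum_congr rfl
    intro k _
    rw [eval_mul, eval_rename, Sum.elim_comp_inl, eval_DPd, ← wirtinger_eq d S hd k z]
  have hF : Pd S c + ∑ k, rename Sum.inl (l k) * DPd S c k = 0 := by
    apply vanishing
    intro z
    rw [heval c hS z]
    exact hid z
  have hF0 : Pd S c0 + ∑ k, rename Sum.inl (l k) * DPd S c0 k = 0 :=
    balanced δ S c c0 (fun AB => rfl) l hlw hF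
  have hbalfun : ∀ z : Fin n → ℂ,
      polyFun c0 z (star z) + ∑ k, eval z (l k) * wirtinger c0 k z = 0 := by
    intro z
    rw [← heval c0 hS0 z, hF0, map_zero]
  have heuler : ∀ z : Fin n → ℂ,
      ∑ k, (((2 / μ * δ k : ℝ)) : ℂ) * z k * wirtinger c0 k z = polyFun c0 z (star z) := by
    intro z
    have h1 : ∀ k, (((2 / μ * δ k : ℝ)) : ℂ) * z k * wirtinger c0 k z
        = ((2 / μ : ℝ) : ℂ) * ((δ k : ℂ) * z k * wirtinger c0 k z) := by
      intro k
      push_cast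
      ring
    rw [Finset.sum_congr rfl (fun k _ => h1 k), ← Finset.mul_sum, euler_sum δ c0 S hS0 z,
      polyFun_eq c0 S hS0, Finset.mul_sum]
    apply Finset.sum_congr rfl
    intro AB _
    rcases eq_or_ne (c0 AB) 0 with h0 | h0
    · rw [h0]
      ring
    · have hww : wtOf δ AB.1 = wtOf δ AB.2 := by
        by_contra hne
        exact h0 (by simp [hc0, hne])
      have hcAB : c AB ≠ 0 := by
        intro hcz
        exact h0 (by simp [hc0, hcz])
      have hsum := hhom AB hcAB
      have hwA : wtOf δ AB.1 = μ / 2 := by linarith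
      have hone : ((2 / μ : ℝ) : ℂ) * ((wtOf δ AB.1 : ℝ) : ℂ) = 1 := by
        rw [← Complex.ofReal_mul]
        have hr : (2 / μ * wtOf δ AB.1 : ℝ) = 1 := by
          rw [hwA]
          field_simp
        rw [hr, Complex.ofReal_one]
      calc ((2 / μ : ℝ) : ℂ) * (((wtOf δ AB.1 : ℝ) : ℂ) * c0 AB * mono AB.1 z
            * mono AB.2 (star z))
          = (((2 / μ : ℝ) : ℂ) * ((wtOf δ AB.1 : ℝ) : ℂ)) * (c0 AB * mono AB.1 z
            * mono AB.2 (star z)) := by ring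
        _ = c0 AB * mono AB.1 z * mono AB.2 (star z) := by rw [hone]; ring
  set R : Fin n → MvPolynomial (Fin n) ℂ :=
    fun j => l j + MvPolynomial.C (((2 / μ * δ j : ℝ)) : ℂ) * MvPolynomial.X j with hR
  have hRzero : ∀ j, R j = 0 := by
    by_contra hcon
    push_neg at hcon
    obtain ⟨j0, hj0⟩ := hcon
    apply hnd
    refine ⟨R, ⟨j0, hj0⟩, ?_⟩
    intro z
    have hexp : ∀ j, eval z (R j) * wirtinger c0 j z
        = eval z (l j) * wirtinger c0 j z
          + (((2 / μ * δ j : ℝ)) : ℂ) * z j * wirtinger c0 j z := by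
      intro j
      rw [hR]
      simp only [eval_add, eval_mul, eval_C, eval_X]
      ring
    rw [Finset.sum_congr rfl (fun j _ => hexp j), Finset.sum_add_distrib, heuler z, add_comm]
    exact hbalfun z
  have hpart1 : ∀ k, l k = MvPolynomial.C (((-(2 / μ) * δ k : ℝ)) : ℂ) * MvPolynomial.X k := by
    intro k
    have h0 := hRzero k
    rw [hR] at h0
    have hlk : l k = -(MvPolynomial.C (((2 / μ * δ k : ℝ)) : ℂ) * MvPolynomial.X k) :=
      eq_neg_of_add_eq_zero_left h0
    rw [hlk, show ((-(2 / μ) * δ k : ℝ) : ℂ) = -(((2 / μ * δ k : ℝ)) : ℂ) by push_cast; ring,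
      map_neg, neg_mul]
  set d2 : MI n → ℂ := fun AB => c AB * (1 - ((2 / μ * wtOf δ AB.1 : ℝ) : ℂ)) with hd2def
  have hd2S : Function.support d2 ⊆ ↑S := by
    intro AB h
    apply hS
    intro hcz
    apply h
    simp [hd2def, hcz]
  have hPd2 : Pd S d2 = 0 := by
    apply vanishing
    intro z
    rw [eval_Pd]
    have hid2 := hid z
    rw [polyFun_eq c S hS] at hid2
    have hterm : ∀ k, eval z (l k) * wirtinger c k z
        = -(((2 / μ : ℝ) : ℂ) * ((δ k : ℂ) * z k * wirtinger c k z)) := by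
      intro k
      rw [hpart1 k]
      simp only [eval_mul, eval_C, eval_X]
      push_cast
      ring
    rw [Finset.sum_congr rfl (fun k _ => hterm k), Finset.sum_neg_distrib, ← Finset.mul_sum,
      euler_sum δ c S hS z] at hid2
    calc ∑ AB ∈ S, d2 AB * mono AB.1 z * mono AB.2 (star z)
        = ∑ AB ∈ S, (c AB * mono AB.1 z * mono AB.2 (star z)
            - ((2 / μ : ℝ) : ℂ) * (((wtOf δ AB.1 : ℝ) : ℂ) * c AB * mono AB.1 z
              * mono AB.2 (star z))) := by
          apply Finset.sum_congr rfl
          intro AB _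
          rw [hd2def]
          push_cast
          ring
      _ = 0 := by
          rw [Finset.sum_sub_distrib, ← Finset.mul_sum, sub_eq_add_neg]
          exact hid2
  have hpart2 : ∀ AB, c AB ≠ 0 → wtOf δ AB.1 = wtOf δ AB.2 := by
    intro AB hc
    have hmem : AB ∈ S := by
      rw [hSdef]
      exact hfin.mem_toFinset.2 hc
    have hco := congrArg (coeff (em AB)) hPd2
    rw [coeff_Pd, coeff_zero, Finset.sum_eq_single AB] at hco
    · rw [if_pos rfl, hd2def] at hco
      have h1 : (1 - ((2 / μ * wtOf δ AB.1 : ℝ) : ℂ)) = 0 := by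
        rcases mul_eq_zero.1 hco with h | h
        · exact absurd h hc
        · exact h
      have h2 : (2 / μ * wtOf δ AB.1 : ℝ) = 1 := by
        have hx : ((2 / μ * wtOf δ AB.1 : ℝ) : ℂ) = ((1 : ℝ) : ℂ) := by
          rw [Complex.ofReal_one]
          exact (sub_eq_zero.1 h1).symm
        exact_mod_cast hx
      have hwA : wtOf δ AB.1 = μ / 2 := by
        rw [div_mul_eq_mul_div, div_eq_iff hμ] at h2
        linarith
      have hsum := hhom AB hc
      linarith
    · intro CD _ hne
      rw [if_neg (fun he => hne (em_injective he))]
    · intro habs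
      exact absurd hmem habs
  exact ⟨hpart1, hpart2⟩
end
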